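/- The code space of the X–I code Ξ(2m), i.e. the subspace of states fixed by every Z-generator and every X-generator, is exactly the two-dimensional span of |0̄⟩ and |1̄⟩; in particular Ξ(2m) encodes exactly one logical qubit. -/

import Mathlib

open scoped BigOperators

/-- Bit strings on `2m` qubits. -/
abbrev Bits (m : ℕ) := Fin (2*m) → ZMod 2

/-- The `2m`-qubit Hilbert space, as functions from computational basis labels to `ℂ`. -/
abbrev QState (m : ℕ) := Bits m → ℂ

/-- Indicator bit string of a finite set of qubits. -/
def indSet (m : ℕ) (S : Finset (Fin (2*m))) : Bits m := fun i => if i ∈ S then 1 else 0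

/-- The Pauli-X operator on the set `S`: sends `|x⟩` to `|x + 1_S⟩`. -/
def Xop (m : ℕ) (S : Finset (Fin (2*m))) : QState m →ₗ[ℂ] QState m where
  toFun v := fun x => v (x + indSet m S)
  map_add' _ _ := rfl
  map_smul' _ _ := rfl

/-- The Pauli-Z operator on the set `S`: sends `|x⟩` to `(-1)^{∑_{i∈S} x i} |x⟩`. -/
def Zop (m : ℕ) (S : Finset (Fin (2*m))) : QState m →ₗ[ℂ] QState m where
  toFun v := fun x => ((-1 : ℂ) ^ (∑ i ∈ S, (x i).val)) * v x
  map_add' u v := by funext x; simp [mul_add]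
  map_smul' c v := by funext x; simp; ring

/-- The antipodal involution `τ i = i + m (mod 2m)`. -/
def tau (m : ℕ) (i : Fin (2*m)) : Fin (2*m) :=
  ⟨(i.val + m) % (2*m), Nat.mod_lt _ (by have := i.isLt; omega)⟩

/-- The computational basis state `|x⟩`. -/
def ket (m : ℕ) (x : Bits m) : QState m := fun y => if y = x then 1 else 0

/-- The pair-equal bit string determined by `b : Fin m → ZMod 2`. -/
def xb (m : ℕ) (b : Fin m → ZMod 2) : Bits m :=
  fun i => b ⟨i.val % m, Nat.mod_lt _ (by have := i.isLt; omega)⟩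

/-- The logical codeword `|0̄⟩` of the X–I code `Ξ(2m)`. -/
noncomputable def ket0 (m : ℕ) : QState m :=
  ((Real.sqrt (2 ^ (m-1)) : ℂ))⁻¹ •
    ∑ b ∈ Finset.univ.filter (fun b : Fin m → ZMod 2 => ∑ i, b i = 0), ket m (xb m b)

/-- The logical codeword `|1̄⟩` of the X–I code `Ξ(2m)`. -/
noncomputable def ket1 (m : ℕ) : QState m :=
  ((Real.sqrt (2 ^ (m-1)) : ℂ))⁻¹ •
    ∑ b ∈ Finset.univ.filter (fun b : Fin m → ZMod 2 => ∑ i, b i = 1), ket m (xb m b)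

/-- The code space of the X–I code `Ξ(2m)`: all states fixed by every Z-generator
and every X-generator. -/
def XIcodeSpace (m : ℕ) : Set (QState m) :=
  {v | (∀ i : Fin (2*m), Zop m {i, tau m i} v = v) ∧
       (∀ i j : Fin (2*m), ({i, tau m i} : Finset (Fin (2*m))) ≠ {j, tau m j} →
          Xop m {i, tau m i, j, tau m j} v = v)}

/-!
A state fixed by the Z-generators `Z_i Z_{τ i}` is supported on the pair-equal strings `x_b`, and
on these the X-generators act as the translations `b ↦ b + e_a + e_{a'}` (`a ≠ a'`), which connect
any two `b` of the same parity. So a code state is constant on the two parity classes of `b`,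
i.e. a combination of their (linearly independent) indicator states, which up to normalisation
are `|0̄⟩` and `|1̄⟩`.
-/

open Finset

theorem ZMod.eq_zero_or_eq_one (a : ZMod 2) : a = 0 ∨ a = 1 := by
  revert a; decide

theorem ZMod.apply_eq_of_sum_eq {ι α : Type*} [Fintype ι] [DecidableEq ι]
    {f : (ι → ZMod 2) → α}
    (hf : ∀ x i j, i ≠ j → f (x + (Pi.single i 1 + Pi.single j 1)) = f x)
    {b c : ι → ZMod 2} (h : ∑ i, b i = ∑ i, c i) : f b = f c := by
  rcases isEmpty_or_nonempty ι with _ | ⟨⟨i₀⟩⟩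
  · exact congrArg f (Subsingleton.elim b c)
  set d := c - b
  have hd : ∑ i, d i = 0 := by simp [d, Finset.sum_sub_distrib, h]
  -- `d` has even weight, hence is a sum of the moves `e_i + e_{i₀}`
  have hdecomp : d = ∑ i, (Pi.single i (d i) + Pi.single i₀ (d i)) := by
    ext k
    simp [Finset.sum_add_distrib, Pi.single_apply, hd]
  have hinv : ∀ x, f (x + d) = f x := by
    rw [hdecomp]
    refine Finset.sum_induction _ (fun e => ∀ x, f (x + e) = f x) ?_ (by simp) ?_
    · intro e e' he he' x
      rw [← add_assoc, he', he]
    · intro i _ x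
      rcases eq_or_ne i i₀ with rfl | hi
      · simp [← Pi.single_add, CharTwo.add_self_eq_zero]
      · obtain h0 | h1 := ZMod.eq_zero_or_eq_one (d i)
        · simp [h0]
        · rw [h1]; exact hf x i i₀ hi
  simpa [d] using (hinv b).symm

theorem Nat.mod_eq_ite_of_lt_two_mul {k n : ℕ} (hk : k < 2 * n) :
    k % n = if k < n then k else k - n := by
  split_ifs with h
  · exact Nat.mod_eq_of_lt h
  · rw [Nat.mod_eq_sub_mod (not_lt.1 h), Nat.mod_eq_of_lt (by omega)]

def pairIndex (m : ℕ) (i : Fin (2*m)) : Fin m :=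
  ⟨i.val % m, Nat.mod_lt _ (by have := i.isLt; omega)⟩

section Pairs

variable {m : ℕ}

theorem tau_val (i : Fin (2*m)) :
    (tau m i).val = if i.val < m then i.val + m else i.val - m := by
  show (i.val + m) % (2*m) = _
  rw [Nat.mod_eq_ite_of_lt_two_mul (by omega)]
  split_ifs <;> omega

theorem pairIndex_val (i : Fin (2*m)) :
    (pairIndex m i).val = if i.val < m then i.val else i.val - m :=
  Nat.mod_eq_ite_of_lt_two_mul i.isLt

theorem tau_ne_self (i : Fin (2*m)) : tau m i ≠ i := by
  rw [Ne, Fin.ext_iff, tau_val]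
  split_ifs <;> omega

theorem pairIndex_eq_iff {i j : Fin (2*m)} :
    pairIndex m j = pairIndex m i ↔ j = i ∨ j = tau m i := by
  simp only [Fin.ext_iff, pairIndex_val, tau_val]
  split_ifs <;> omega

theorem mem_pair_iff {i j : Fin (2*m)} :
    j ∈ ({i, tau m i} : Finset (Fin (2*m))) ↔ pairIndex m j = pairIndex m i := by
  simp [pairIndex_eq_iff]

theorem pair_eq_pair_iff {i j : Fin (2*m)} :
    ({i, tau m i} : Finset (Fin (2*m))) = {j, tau m j} ↔ pairIndex m i = pairIndex m j := by
  refine ⟨fun h => mem_pair_iff.1 (h ▸ mem_insert_self i _), fun h => ?_⟩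
  ext k
  rw [mem_pair_iff, mem_pair_iff, h]

theorem pairIndex_castLE (a : Fin m) : pairIndex m (Fin.castLE (by omega) a) = a :=
  Fin.ext (Nat.mod_eq_of_lt a.isLt)

theorem xb_apply (b : Fin m → ZMod 2) (i : Fin (2*m)) : xb m b i = b (pairIndex m i) := rfl

theorem xb_injective : Function.Injective (xb m) := fun b c h => by
  ext a
  simpa [xb_apply, pairIndex_castLE] using congrFun h (Fin.castLE (by omega) a)

theorem range_xb : Set.range (xb m) = {x | ∀ i, x (tau m i) = x i} := by
  ext x
  refine ⟨?_, fun hx => ⟨fun a => x (Fin.castLE (by omega) a), funext fun i => ?_⟩⟩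
  · rintro ⟨b, rfl⟩ i
    rw [xb_apply, xb_apply, pairIndex_eq_iff.2 (Or.inr rfl)]
  · rcases pairIndex_eq_iff.1 (pairIndex_castLE (pairIndex m i)) with h | h
    · rw [xb_apply, h]
    · rw [xb_apply, h, hx]

theorem indSet_pair_union {i j : Fin (2*m)} (h : pairIndex m i ≠ pairIndex m j) :
    indSet m {i, tau m i, j, tau m j} =
      xb m (Pi.single (pairIndex m i) 1 + Pi.single (pairIndex m j) 1) := by
  ext k
  have hk : k ∈ ({i, tau m i, j, tau m j} : Finset (Fin (2*m))) ↔
      pairIndex m k = pairIndex m i ∨ pairIndex m k = pairIndex m j := by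
    rw [← mem_pair_iff, ← mem_pair_iff]
    simp only [mem_insert, mem_singleton, or_assoc]
  rw [indSet, xb_apply, Pi.add_apply, Pi.single_apply, Pi.single_apply]
  by_cases hi : pairIndex m k = pairIndex m i <;> by_cases hj : pairIndex m k = pairIndex m j
  · exact absurd (hi.symm.trans hj) h
  all_goals simp [hk, hi, hj, h, h.symm]

end Pairs

section CodeSpace

variable {m : ℕ}

theorem Zop_pair_apply (v : QState m) (x : Bits m) (i : Fin (2*m)) :
    Zop m {i, tau m i} v x = (if x (tau m i) = x i then 1 else -1) * v x := by
  show (-1 : ℂ) ^ (∑ k ∈ {i, tau m i}, (x k).val) * v x = _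
  rw [sum_pair (tau_ne_self i).symm]
  rcases ZMod.eq_zero_or_eq_one (x i) with h | h <;>
    rcases ZMod.eq_zero_or_eq_one (x (tau m i)) with h' | h' <;> simp [h, h', ZMod.val_one]

theorem Zop_pair_eq_self_iff {v : QState m} {i : Fin (2*m)} :
    Zop m {i, tau m i} v = v ↔ ∀ x, x (tau m i) ≠ x i → v x = 0 := by
  simp only [funext_iff, Zop_pair_apply]
  refine forall_congr' fun x => ?_
  split_ifs with h <;> simp [h, CharZero.neg_eq_self_iff]

theorem forall_Zop_pair_eq_self_iff {v : QState m} :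
    (∀ i, Zop m {i, tau m i} v = v) ↔ ∀ x ∉ Set.range (xb m), v x = 0 := by
  simp only [Zop_pair_eq_self_iff, range_xb, Set.mem_ofPred_eq, not_forall]
  exact ⟨fun h x ⟨i, hi⟩ => h i x hi, fun h i x hi => h x ⟨i, hi⟩⟩

theorem Xop_pair_union_apply {i j : Fin (2*m)} (h : pairIndex m i ≠ pairIndex m j)
    (v : QState m) (x : Bits m) :
    Xop m {i, tau m i, j, tau m j} v x =
      v (x + xb m (Pi.single (pairIndex m i) 1 + Pi.single (pairIndex m j) 1)) := by
  rw [← indSet_pair_union h]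
  rfl

theorem mem_XIcodeSpace_iff {v : QState m} :
    v ∈ XIcodeSpace m ↔ (∀ x ∉ Set.range (xb m), v x = 0) ∧
      ∀ b c : Fin m → ZMod 2, ∑ i, b i = ∑ i, c i → v (xb m b) = v (xb m c) := by
  rw [XIcodeSpace, Set.mem_ofPred_eq, forall_Zop_pair_eq_self_iff]
  refine and_congr_right fun hsupp => ⟨fun hX b c h => ?_, fun hpar i j hij => ?_⟩
  · refine ZMod.apply_eq_of_sum_eq (f := v ∘ xb m) (fun b a a' ha => ?_) h
    let i := Fin.castLE (show m ≤ 2*m by omega) a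
    let j := Fin.castLE (show m ≤ 2*m by omega) a'
    have hij : pairIndex m i ≠ pairIndex m j := by rwa [pairIndex_castLE, pairIndex_castLE]
    have := congrFun (hX i j (pair_eq_pair_iff.not.2 hij)) (xb m b)
    rwa [Xop_pair_union_apply hij, pairIndex_castLE, pairIndex_castLE] at this
  · rw [Ne, pair_eq_pair_iff] at hij
    ext x
    rw [Xop_pair_union_apply hij]
    set d : Fin m → ZMod 2 := Pi.single (pairIndex m i) 1 + Pi.single (pairIndex m j) 1
    by_cases hx : x ∈ Set.range (xb m)
    · obtain ⟨b, rfl⟩ := hx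
      refine hpar (b + d) b ?_
      simp [d, sum_add_distrib, CharTwo.add_self_eq_zero]
    · have hxd : x + xb m d ∉ Set.range (xb m) := by
        rintro ⟨c, hc⟩
        refine hx ⟨c - d, ?_⟩
        rw [show xb m (c - d) = xb m c - xb m d from rfl, hc, add_sub_cancel_right]
      rw [hsupp x hx, hsupp _ hxd]

end CodeSpace

section Codewords

variable {m : ℕ}

noncomputable def parityState (m : ℕ) (s : ZMod 2) : QState m :=
  ∑ b ∈ univ.filter (fun b : Fin m → ZMod 2 => ∑ i, b i = s), ket m (xb m b)

theorem parityState_apply_xb (s : ZMod 2) (b : Fin m → ZMod 2) :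
    parityState m s (xb m b) = if ∑ i, b i = s then 1 else 0 := by
  simp [parityState, ket, xb_injective.eq_iff]

theorem parityState_apply_of_notMem_range {x : Bits m} (hx : x ∉ Set.range (xb m))
    (s : ZMod 2) : parityState m s x = 0 := by
  rw [parityState, Finset.sum_apply]
  exact sum_eq_zero fun b _ => if_neg fun h => hx ⟨b, h.symm⟩

open Pointwise in
theorem span_ket0_ket1 :
    Submodule.span ℂ {ket0 m, ket1 m} = Submodule.span ℂ {parityState m 0, parityState m 1} := by
  have hunit : IsUnit ((Real.sqrt (2 ^ (m-1)) : ℂ))⁻¹ := by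
    simp only [isUnit_iff_ne_zero, ne_eq, inv_eq_zero, Complex.ofReal_eq_zero]
    positivity
  rw [← Submodule.span_smul_eq_of_isUnit {parityState m 0, parityState m 1} _ hunit,
    Set.smul_set_insert, Set.smul_set_singleton]
  rfl

theorem XIcodeSpace_eq_span_parityState (hm : 0 < m) :
    XIcodeSpace m = Submodule.span ℂ {parityState m 0, parityState m 1} := by
  ext v
  rw [mem_XIcodeSpace_iff, SetLike.mem_coe, Submodule.mem_span_pair]
  constructor
  · rintro ⟨hsupp, hpar⟩
    refine ⟨v (xb m 0), v (xb m (Pi.single ⟨0, hm⟩ 1)), funext fun x => ?_⟩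
    by_cases hx : x ∈ Set.range (xb m)
    · obtain ⟨b, rfl⟩ := hx
      rcases ZMod.eq_zero_or_eq_one (∑ i, b i) with h | h
      · simp [parityState_apply_xb, h, hpar b 0 (by simp [h])]
      · simp [parityState_apply_xb, h, hpar b (Pi.single ⟨0, hm⟩ 1) (by simp [h])]
    · simp [parityState_apply_of_notMem_range hx, hsupp x hx]
  · rintro ⟨a, c, rfl⟩
    exact ⟨fun x hx => by simp [parityState_apply_of_notMem_range hx],
      fun b b' h => by simp [parityState_apply_xb, h]⟩

theorem linearIndependent_parityState (hm : 0 < m) :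
    LinearIndependent ℂ ![parityState m 0, parityState m 1] := by
  rw [LinearIndependent.pair_iff]
  intro s t hst
  have h0 := congrFun hst (xb m 0)
  have h1 := congrFun hst (xb m (Pi.single ⟨0, hm⟩ 1))
  simp [parityState_apply_xb] at h0 h1
  exact ⟨h0, h1⟩

end Codewords

/-- The code space of `Ξ(2m)` is exactly the two-dimensional span of `|0̄⟩` and `|1̄⟩`;
in particular `Ξ(2m)` encodes exactly one logical qubit. -/
theorem XI_codeSpace_eq_span (m : ℕ) (hm : 2 ≤ m) :
    XIcodeSpace m = (Submodule.span ℂ {ket0 m, ket1 m} : Submodule ℂ (QState m)) ∧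
    Module.finrank ℂ (Submodule.span ℂ {ket0 m, ket1 m} : Submodule ℂ (QState m)) = 2 := by
  have hm₀ : 0 < m := by omega
  rw [span_ket0_ket1, XIcodeSpace_eq_span_parityState hm₀]
  refine ⟨rfl, ?_⟩
  rw [← Matrix.range_cons_cons_empty _ _ ![],
    finrank_span_eq_card (linearIndependent_parityState hm₀), Fintype.card_fin]
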